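/- The counter program Addition[x,y,z], defined as: Copy[x,x']; Copy[y,y']; Copy[z,z']; loop { z' -= 1; (x' -= 1 or y' -= 1) }; zero-test(x'); zero-test(y'); zero-test(z'), satisfies: (1) Addition[x,y,z] admits a valid run if and only if val₁(x) + val₁(y) = val₁(z); (2) Addition[x,y,z] is a component (every valid run performs exactly 12 zero tests); and (3) the effect of Addition[x,y,z] on the counters x, y, z is zero. -/
import Mathlib


/-!
STATEMENT 5: The counter program Addition[x,y,z], defined as
`Copy[x,x']; Copy[y,y']; Copy[z,z'];
 loop { z' -= 1; (x' -= 1 or y' -= 1) };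
 zero-test(x'); zero-test(y'); zero-test(z')`,
satisfies:
(1) Addition[x,y,z] admits a valid run iff val₁(x) + val₁(y) = val₁(z);
(2) Addition[x,y,z] is a component (every valid run performs exactly 12 zero tests);
(3) the effect of Addition[x,y,z] on the counters x, y, z is zero.

The initial configuration is assumed to satisfy the ambient invariants of the
construction: the hat-companion invariant, validity, a sufficient budget on
the testing counter u₁, and the auxiliary counter t being 0.
-/

/-- Structured counter programs over a set `V` of counters.  Every counter
`v ∈ V` has a companion (hat) counter `v̂`, and there are two distinguished
testing counters `u₁`, `u₂`; this is built into the configurations below.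
`zeroTest v` is the gadget
`loop { v += 1; v̂ -= 1; u₂ -= 1 }; loop { v -= 1; v̂ += 1; u₂ -= 1 }; u₁ -= 2`,
and `zeroTestHat v` is the same gadget applied to the companion counter `v̂`. -/
inductive CProg (V : Type) : Type
  | skip : CProg V
  | inc : V → ℕ → CProg V          -- v += c (accompanied by v̂ -= c)
  | dec : V → ℕ → CProg V          -- v -= c (accompanied by v̂ += c)
  | seq : CProg V → CProg V → CProg V
  | choice : CProg V → CProg V → CProg V   -- "C₁ or C₂"
  | loop : CProg V → CProg V
  | zeroTest : V → CProg V
  | zeroTestHat : V → CProg V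

/-- A configuration: the values of the counters of interest, of their hat
companions, and of the two testing counters `u₁` and `u₂`. -/
structure CState (V : Type) where
  val : V → ℕ
  hat : V → ℕ
  u1 : ℕ
  u2 : ℕ

/-- Big-step semantics: `Exec p s n t` means that program `p` has a complete
run from configuration `s` to configuration `t` (reaching the final `halt`)
performing exactly `n` zero-test instructions.  Every `v += c` is accompanied
by `v̂ -= c` and vice versa; decrements block if a counter would go negative.
The `zeroTest v` case captures exactly the runs of the gadget
`loop { v += 1; v̂ -= 1; u₂ -= 1 }; loop { v -= 1; v̂ += 1; u₂ -= 1 }; u₁ -= 2`,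
where the first loop is executed `m₁` times and the second one `m₂` times. -/
inductive Exec {V : Type} [DecidableEq V] : CProg V → CState V → ℕ → CState V → Prop
  | skip (s : CState V) : Exec .skip s 0 s
  | inc (v : V) (c : ℕ) (s : CState V) (h : c ≤ s.hat v) :
      Exec (.inc v c) s 0
        ⟨Function.update s.val v (s.val v + c),
         Function.update s.hat v (s.hat v - c), s.u1, s.u2⟩
  | dec (v : V) (c : ℕ) (s : CState V) (h : c ≤ s.val v) :
      Exec (.dec v c) s 0
        ⟨Function.update s.val v (s.val v - c),
         Function.update s.hat v (s.hat v + c), s.u1, s.u2⟩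
  | seq {p q : CProg V} {s t u : CState V} {n m : ℕ}
      (h1 : Exec p s n t) (h2 : Exec q t m u) : Exec (.seq p q) s (n + m) u
  | choiceL {p : CProg V} (q : CProg V) {s t : CState V} {n : ℕ}
      (h : Exec p s n t) : Exec (.choice p q) s n t
  | choiceR (p : CProg V) {q : CProg V} {s t : CState V} {n : ℕ}
      (h : Exec q s n t) : Exec (.choice p q) s n t
  | loopStop (p : CProg V) (s : CState V) : Exec (.loop p) s 0 s
  | loopStep {p : CProg V} {s t u : CState V} {n m : ℕ}
      (h1 : Exec p s n t) (h2 : Exec (.loop p) t m u) : Exec (.loop p) s (n + m) u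
  | zeroTest (v : V) (s : CState V) (m₁ m₂ : ℕ)
      (h1 : m₁ ≤ s.hat v) (h2 : m₂ ≤ s.val v + m₁) (h3 : m₁ + m₂ ≤ s.u2) (h4 : 2 ≤ s.u1) :
      Exec (.zeroTest v) s 1
        ⟨Function.update s.val v (s.val v + m₁ - m₂),
         Function.update s.hat v (s.hat v - m₁ + m₂),
         s.u1 - 2, s.u2 - (m₁ + m₂)⟩
  | zeroTestHat (v : V) (s : CState V) (m₁ m₂ : ℕ)
      (h1 : m₁ ≤ s.val v) (h2 : m₂ ≤ s.hat v + m₁) (h3 : m₁ + m₂ ≤ s.u2) (h4 : 2 ≤ s.u1) :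
      Exec (.zeroTestHat v) s 1
        ⟨Function.update s.val v (s.val v - m₁ + m₂),
         Function.update s.hat v (s.hat v + m₁ - m₂),
         s.u1 - 2, s.u2 - (m₁ + m₂)⟩

/-- A configuration is valid if `u₂ = u₁ · N`. -/
def ValidCfg {V : Type} (N : ℕ) (s : CState V) : Prop := s.u2 = s.u1 * N

/-- The hat-companion invariant: `v + v̂ = N` for every counter `v`. -/
def HatInv {V : Type} (N : ℕ) (s : CState V) : Prop := ∀ v, s.val v + s.hat v = N

/-- `C` admits a valid run from `s`: a run starting in a valid configuration,
reaching the final `halt` instruction, and ending in a valid configuration. -/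
def AdmitsValidRun {V : Type} [DecidableEq V] (N : ℕ) (C : CProg V) (s : CState V) : Prop :=
  ValidCfg N s ∧ ∃ (n : ℕ) (t : CState V), Exec C s n t ∧ ValidCfg N t

/-- `C` is a component: there is a polynomial bounding, in terms of the bound
`N`, the number of zero tests performed by any valid run (the testing counters
`u₁`, `u₂` are updated only by zero-test instructions, by the very construction
of the syntax). -/
def IsComponent {V : Type} [DecidableEq V] (C : CProg V) : Prop :=
  ∃ p : Polynomial ℕ, ∀ (N : ℕ) (s t : CState V) (n : ℕ),
    HatInv N s → ValidCfg N s → Exec C s n t → ValidCfg N t → n ≤ Polynomial.eval N p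

/-- The program `Copy[x,x']` (with auxiliary counter `t`):
`loop { x' -= 1 }; zero-test(x'); loop { x -= 1; x' += 1; t += 1 };
zero-test(x); loop { t -= 1; x += 1 }; zero-test(t)`. -/
def copyProg {V : Type} (x x' t : V) : CProg V :=
  .seq (.loop (.dec x' 1))
  (.seq (.zeroTest x')
  (.seq (.loop (.seq (.dec x 1) (.seq (.inc x' 1) (.inc t 1))))
  (.seq (.zeroTest x)
  (.seq (.loop (.seq (.dec t 1) (.inc x 1)))
        (.zeroTest t)))))

/-- The program `Addition[x,y,z]`. -/
def addProg {V : Type} (x y z x' y' z' t : V) : CProg V :=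
  .seq (copyProg x x' t)
  (.seq (copyProg y y' t)
  (.seq (copyProg z z' t)
  (.seq (.loop (.seq (.dec z' 1) (.choice (.dec x' 1) (.dec y' 1))))
  (.seq (.zeroTest x')
  (.seq (.zeroTest y')
        (.zeroTest z'))))))
section Aux
variable {V : Type} [DecidableEq V]

lemma exec_congr {p : CProg V} {s t t' : CState V} {n n' : ℕ}
    (h : Exec p s n t) (hn : n = n') (ht : t = t') : Exec p s n' t' := by
  subst hn; subst ht; exact h

lemma exec_u1 {p : CProg V} {s t : CState V} {n : ℕ} (h : Exec p s n t) :
    t.u1 + 2 * n = s.u1 := by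
  induction h with
  | skip => simp
  | inc => simp
  | dec => simp
  | seq h1 h2 ih1 ih2 => omega
  | choiceL q h ih => exact ih
  | choiceR p h ih => exact ih
  | loopStop => simp
  | loopStep h1 h2 ih1 ih2 => omega
  | zeroTest v s m₁ m₂ h1 h2 h3 h4 => simp only []; omega
  | zeroTestHat v s m₁ m₂ h1 h2 h3 h4 => simp only []; omega

lemma exec_hat {p : CProg V} {s t : CState V} {n : ℕ} {N : ℕ} (h : Exec p s n t)
    (hs : HatInv N s) : HatInv N t := by
  induction h with
  | skip => exact hs
  | inc v c s h =>
      intro w; by_cases hw : w = v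
      · subst hw; have := hs w; simp only [Function.update_self]; omega
      · simpa [Function.update_of_ne hw] using hs w
  | dec v c s h =>
      intro w; by_cases hw : w = v
      · subst hw; have := hs w; simp only [Function.update_self]; omega
      · simpa [Function.update_of_ne hw] using hs w
  | seq h1 h2 ih1 ih2 => exact ih2 (ih1 hs)
  | choiceL q h ih => exact ih hs
  | choiceR p h ih => exact ih hs
  | loopStop => exact hs
  | loopStep h1 h2 ih1 ih2 => exact ih2 (ih1 hs)
  | zeroTest v s m₁ m₂ h1 h2 h3 h4 =>
      intro w; by_cases hw : w = v
      · subst hw; have := hs w; simp only [Function.update_self]; omega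
      · simpa [Function.update_of_ne hw] using hs w
  | zeroTestHat v s m₁ m₂ h1 h2 h3 h4 =>
      intro w; by_cases hw : w = v
      · subst hw; have := hs w; simp only [Function.update_self]; omega
      · simpa [Function.update_of_ne hw] using hs w

end Aux
section Aux2
variable {V : Type} [DecidableEq V]

/-- Syntactic zero-test counting certificates. -/
inductive Nice {V : Type} : CProg V → ℕ → Prop
  | skip : Nice .skip 0
  | inc (v c) : Nice (.inc v c) 0
  | dec (v c) : Nice (.dec v c) 0
  | seq {p q a b} : Nice p a → Nice q b → Nice (.seq p q) (a + b)
  | choice {p q a} : Nice p a → Nice q a → Nice (.choice p q) a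
  | loop {p} : Nice p 0 → Nice (.loop p) 0
  | zeroTest (v) : Nice (.zeroTest v) 1
  | zeroTestHat (v) : Nice (.zeroTestHat v) 1

lemma exec_count {p : CProg V} {s t : CState V} {n : ℕ} (h : Exec p s n t) :
    ∀ {a : ℕ}, Nice p a → n = a := by
  induction h with
  | skip => intro a ha; cases ha; rfl
  | inc => intro a ha; cases ha; rfl
  | dec => intro a ha; cases ha; rfl
  | seq h1 h2 ih1 ih2 => intro a ha; cases ha with
    | seq hp hq => rw [ih1 hp, ih2 hq]
  | choiceL q h ih => intro a ha; cases ha with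
    | choice hp hq => exact ih hp
  | choiceR p h ih => intro a ha; cases ha with
    | choice hp hq => exact ih hq
  | loopStop => intro a ha; cases ha; rfl
  | loopStep h1 h2 ih1 ih2 =>
      intro a ha
      cases ha with
      | loop hp => rw [ih1 hp, ih2 (Nice.loop hp)]
  | zeroTest v s m₁ m₂ h1 h2 h3 h4 => intro a ha; cases ha; rfl
  | zeroTestHat v s m₁ m₂ h1 h2 h3 h4 => intro a ha; cases ha; rfl

omit [DecidableEq V] in
lemma nice_copy (x x' t : V) : Nice (copyProg x x' t) 3 := by
  have h : Nice (copyProg x x' t) (0 + (1 + (0 + (1 + (0 + 1))))) := by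
    unfold copyProg
    exact .seq (.loop (.dec _ _)) (.seq (.zeroTest _)
      (.seq (.loop (.seq (.dec _ _) (.seq (.inc _ _) (.inc _ _))))
      (.seq (.zeroTest _) (.seq (.loop (.seq (.dec _ _) (.inc _ _))) (.zeroTest _)))))
  simpa using h

omit [DecidableEq V] in
lemma nice_add (x y z x' y' z' t : V) : Nice (addProg x y z x' y' z' t) 12 := by
  have h : Nice (addProg x y z x' y' z' t) (3 + (3 + (3 + (0 + (1 + (1 + 1)))))) := by
    unfold addProg
    exact .seq (nice_copy _ _ _) (.seq (nice_copy _ _ _) (.seq (nice_copy _ _ _)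
      (.seq (.loop (.seq (.dec _ _) (.choice (.dec _ _) (.dec _ _))))
      (.seq (.zeroTest _) (.seq (.zeroTest _) (.zeroTest _))))))
  simpa using h

end Aux2
section Aux3
variable {V : Type} [DecidableEq V]

/-- Exact executions: like `Exec`, but every zero test really tests zero
(and hence leaves the counters unchanged, consuming exactly `2·N` from `u₂`). -/
inductive ExecZ {V : Type} [DecidableEq V] (N : ℕ) : CProg V → CState V → ℕ → CState V → Prop
  | skip (s : CState V) : ExecZ N .skip s 0 s
  | inc (v : V) (c : ℕ) (s : CState V) (h : c ≤ s.hat v) :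
      ExecZ N (.inc v c) s 0
        ⟨Function.update s.val v (s.val v + c),
         Function.update s.hat v (s.hat v - c), s.u1, s.u2⟩
  | dec (v : V) (c : ℕ) (s : CState V) (h : c ≤ s.val v) :
      ExecZ N (.dec v c) s 0
        ⟨Function.update s.val v (s.val v - c),
         Function.update s.hat v (s.hat v + c), s.u1, s.u2⟩
  | seq {p q : CProg V} {s t u : CState V} {n m : ℕ}
      (h1 : ExecZ N p s n t) (h2 : ExecZ N q t m u) : ExecZ N (.seq p q) s (n + m) u
  | choiceL {p : CProg V} (q : CProg V) {s t : CState V} {n : ℕ}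
      (h : ExecZ N p s n t) : ExecZ N (.choice p q) s n t
  | choiceR (p : CProg V) {q : CProg V} {s t : CState V} {n : ℕ}
      (h : ExecZ N q s n t) : ExecZ N (.choice p q) s n t
  | loopStop (p : CProg V) (s : CState V) : ExecZ N (.loop p) s 0 s
  | loopStep {p : CProg V} {s t u : CState V} {n m : ℕ}
      (h1 : ExecZ N p s n t) (h2 : ExecZ N (.loop p) t m u) : ExecZ N (.loop p) s (n + m) u
  | zeroTest (v : V) (s : CState V) (hv : s.val v = 0) :
      ExecZ N (.zeroTest v) s 1 ⟨s.val, s.hat, s.u1 - 2, s.u2 - 2 * N⟩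
  | zeroTestHat (v : V) (s : CState V) (hv : s.hat v = 0) :
      ExecZ N (.zeroTestHat v) s 1 ⟨s.val, s.hat, s.u1 - 2, s.u2 - 2 * N⟩

lemma exec_u2_le {N : ℕ} {p : CProg V} {s t : CState V} {n : ℕ} (h : Exec p s n t)
    (hs : HatInv N s) : t.u2 ≤ s.u2 ∧ s.u2 ≤ t.u2 + 2 * n * N := by
  induction h with
  | skip => omega
  | inc v c s h => simp
  | dec v c s h => simp
  | seq h1 h2 ih1 ih2 =>
      have i1 := ih1 hs
      have i2 := ih2 (exec_hat h1 hs)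
      have key : ∀ a b : ℕ, 2 * (a + b) * N = 2 * a * N + 2 * b * N := fun a b => by ring
      rw [key]
      omega
  | choiceL q h ih => exact ih hs
  | choiceR p h ih => exact ih hs
  | loopStop => omega
  | loopStep h1 h2 ih1 ih2 =>
      have i1 := ih1 hs
      have i2 := ih2 (exec_hat h1 hs)
      have key : ∀ a b : ℕ, 2 * (a + b) * N = 2 * a * N + 2 * b * N := fun a b => by ring
      rw [key]
      omega
  | zeroTest v s m₁ m₂ h1 h2 h3 h4 =>
      have hv := hs v
      simp only []
      constructor
      · omega
      · have : m₁ + m₂ ≤ 2 * N := by omega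
        omega
  | zeroTestHat v s m₁ m₂ h1 h2 h3 h4 =>
      have hv := hs v
      simp only []
      constructor
      · omega
      · have : m₁ + m₂ ≤ 2 * N := by omega
        omega

lemma exec_to_execZ {N : ℕ} : ∀ {p : CProg V} {s t : CState V} {n : ℕ},
    Exec p s n t → HatInv N s → s.u2 = t.u2 + 2 * n * N → ExecZ N p s n t := by
  intro p s t n h
  induction h with
  | skip => intro _ _; exact .skip _
  | inc v c s h => intro _ _; exact .inc v c s h
  | dec v c s h => intro _ _; exact .dec v c s h
  | seq h1 h2 ih1 ih2 =>
      intro hinv hex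
      have hm := exec_hat h1 hinv
      have i1 := exec_u2_le h1 hinv
      have i2 := exec_u2_le h2 hm
      have key : ∀ a b : ℕ, 2 * (a + b) * N = 2 * a * N + 2 * b * N := fun a b => by ring
      rw [key] at hex
      exact .seq (ih1 hinv (by omega)) (ih2 hm (by omega))
  | choiceL q h ih => intro hinv hex; exact .choiceL _ (ih hinv hex)
  | choiceR p h ih => intro hinv hex; exact .choiceR _ (ih hinv hex)
  | loopStop => intro _ _; exact .loopStop _ _
  | loopStep h1 h2 ih1 ih2 =>
      intro hinv hex
      have hm := exec_hat h1 hinv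
      have i1 := exec_u2_le h1 hinv
      have i2 := exec_u2_le h2 hm
      have key : ∀ a b : ℕ, 2 * (a + b) * N = 2 * a * N + 2 * b * N := fun a b => by ring
      rw [key] at hex
      exact .loopStep (ih1 hinv (by omega)) (ih2 hm (by omega))
  | zeroTest v s m₁ m₂ h1 h2 h3 h4 =>
      intro hinv hex
      have hv := hinv v
      simp only [] at hex
      have hval : s.val v = 0 := by omega
      have hm1 : m₁ = N := by omega
      have hm2 : m₂ = N := by omega
      have hst : (⟨Function.update s.val v (s.val v + m₁ - m₂),
          Function.update s.hat v (s.hat v - m₁ + m₂),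
          s.u1 - 2, s.u2 - (m₁ + m₂)⟩ : CState V)
          = ⟨s.val, s.hat, s.u1 - 2, s.u2 - 2 * N⟩ := by
        have e1 : s.val v + m₁ - m₂ = s.val v := by omega
        have e2 : s.hat v - m₁ + m₂ = s.hat v := by omega
        rw [e1, e2, Function.update_eq_self, Function.update_eq_self]
        congr 1
        omega
      rw [hst]
      exact .zeroTest v s hval
  | zeroTestHat v s m₁ m₂ h1 h2 h3 h4 =>
      intro hinv hex
      have hv := hinv v
      simp only [] at hex
      have hval : s.hat v = 0 := by omega
      have hm1 : m₁ = N := by omega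
      have hm2 : m₂ = N := by omega
      have hst : (⟨Function.update s.val v (s.val v - m₁ + m₂),
          Function.update s.hat v (s.hat v + m₁ - m₂),
          s.u1 - 2, s.u2 - (m₁ + m₂)⟩ : CState V)
          = ⟨s.val, s.hat, s.u1 - 2, s.u2 - 2 * N⟩ := by
        have e1 : s.val v - m₁ + m₂ = s.val v := by omega
        have e2 : s.hat v + m₁ - m₂ = s.hat v := by omega
        rw [e1, e2, Function.update_eq_self, Function.update_eq_self]
        congr 1
        omega
      rw [hst]
      exact .zeroTestHat v s hval

end Aux3
section Aux4
variable {V : Type} [DecidableEq V] {N : ℕ}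

lemma execZ_loop_aux {b : CProg V} {Q : CState V → Prop}
    (hQ : ∀ s n u, Q s → ExecZ N b s n u → n = 0 ∧ Q u) :
    ∀ {p : CProg V} {s u : CState V} {n : ℕ}, ExecZ N p s n u → p = .loop b →
      Q s → n = 0 ∧ Q u := by
  intro p s u n h
  induction h with
  | skip => intro hp; cases hp
  | inc v c s h => intro hp; cases hp
  | dec v c s h => intro hp; cases hp
  | seq h1 h2 ih1 ih2 => intro hp; cases hp
  | choiceL q h ih => intro hp; cases hp
  | choiceR p h ih => intro hp; cases hp
  | loopStop p s => intro hp hq; exact ⟨rfl, hq⟩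
  | loopStep h1 h2 ih1 ih2 =>
      intro hp hq
      cases hp
      obtain ⟨hn, hq'⟩ := hQ _ _ _ hq h1
      obtain ⟨hm, hq''⟩ := ih2 rfl hq'
      exact ⟨by omega, hq''⟩
  | zeroTest v s hv => intro hp; cases hp
  | zeroTestHat v s hv => intro hp; cases hp

lemma execZ_loop {b : CProg V} {Q : CState V → Prop} {s u : CState V} {n : ℕ}
    (hQ : ∀ s n u, Q s → ExecZ N b s n u → n = 0 ∧ Q u)
    (h : ExecZ N (.loop b) s n u) (hq : Q s) : n = 0 ∧ Q u :=
  execZ_loop_aux hQ h rfl hq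

end Aux4
section Aux5
variable {V : Type} [DecidableEq V] {N : ℕ}

lemma copy_specZ {x x' t : V} {s u : CState V} {n : ℕ}
    (hxx' : x ≠ x') (hxt : x ≠ t) (hx't : x' ≠ t)
    (h : ExecZ N (copyProg x x' t) s n u) (ht0 : s.val t = 0) :
    (∀ w, w ≠ x' → u.val w = s.val w) ∧ u.val x' = s.val x := by
  unfold copyProg at h
  cases h with | seq hL1 h =>
  rename_i s1 n1 m1
  cases h with | seq hT1 h =>
  rename_i s2 n2 m2
  cases h with | seq hL2 h =>
  rename_i s3 n3 m3
  cases h with | seq hT2 h =>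
  rename_i s4 n4 m4
  cases h with | seq hL3 hT3 =>
  rename_i s5 n5 m5
  -- stage 1 : loop { x' -= 1 }
  have H1 := execZ_loop (Q := fun c => ∀ w, w ≠ x' → c.val w = s.val w)
    (by
      intro c m d hq hb
      cases hb with | dec _ _ _ hle =>
      refine ⟨rfl, fun w hw => ?_⟩
      simp only [Function.update_of_ne hw]
      exact hq w hw) hL1 (fun w _ => rfl)
  obtain ⟨-, hq1⟩ := H1
  -- zero-test x'
  cases hT1 with | zeroTest _ _ hv1 =>
  -- stage 2 : loop { x -= 1; x' += 1; t += 1 }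
  have H2 := execZ_loop (Q := fun c => c.val x + c.val x' = s.val x ∧
      c.val t = c.val x' ∧ ∀ w, w ≠ x → w ≠ x' → w ≠ t → c.val w = s.val w)
    (by
      intro c m d hq hb
      cases hb with | seq hd hb =>
      cases hd with | dec _ _ _ hle =>
      cases hb with | seq hi1 hi2 =>
      cases hi1 with | inc _ _ _ hle1 =>
      cases hi2 with | inc _ _ _ hle2 =>
      obtain ⟨e1, e2, e3⟩ := hq
      refine ⟨rfl, ?_, ?_, fun w hw1 hw2 hw3 => ?_⟩
      · simp [Function.update_apply, hxx', hxt, hx't,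
          Ne.symm hxx', Ne.symm hxt, Ne.symm hx't]
        omega
      · simp [Function.update_apply, hxx', hxt, hx't,
          Ne.symm hxx', Ne.symm hxt, Ne.symm hx't]
        omega
      · simp [Function.update_apply, hw1, hw2, hw3]
        exact e3 w hw1 hw2 hw3)
    hL2 (by
      refine ⟨?_, ?_, fun w hw1 hw2 hw3 => ?_⟩
      · show s1.val x + s1.val x' = s.val x
        rw [hq1 x hxx', hv1]
        omega
      · show s1.val t = s1.val x'
        rw [hq1 t hx't.symm, ht0, hv1]
      · exact hq1 w hw2)
  obtain ⟨-, e1, e2, e3⟩ := H2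
  -- zero-test x
  cases hT2 with | zeroTest _ _ hv2 =>
  -- stage 3 : loop { t -= 1; x += 1 }
  have H3 := execZ_loop (Q := fun c => c.val t + c.val x = s.val x ∧
      c.val x' = s.val x ∧ ∀ w, w ≠ x → w ≠ x' → w ≠ t → c.val w = s.val w)
    (by
      intro c m d hq hb
      cases hb with | seq hd hi =>
      cases hd with | dec _ _ _ hle =>
      cases hi with | inc _ _ _ hle1 =>
      obtain ⟨e1, e2, e3⟩ := hq
      refine ⟨rfl, ?_, ?_, fun w hw1 hw2 hw3 => ?_⟩
      · simp [Function.update_apply, hxx', hxt, hx't,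
          Ne.symm hxx', Ne.symm hxt, Ne.symm hx't]
        omega
      · simp [Function.update_apply, hxx', hxt, hx't,
          Ne.symm hxx', Ne.symm hxt, Ne.symm hx't]
        exact e2
      · simp [Function.update_apply, hw1, hw2, hw3]
        exact e3 w hw1 hw2 hw3)
    hL3 (by
      refine ⟨?_, ?_, fun w hw1 hw2 hw3 => ?_⟩
      · show s3.val t + s3.val x = s.val x
        omega
      · show s3.val x' = s.val x
        omega
      · exact e3 w hw1 hw2 hw3)
  obtain ⟨-, f1, f2, f3⟩ := H3
  -- zero-test t
  cases hT3 with | zeroTest _ _ hv3 =>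
  constructor
  · intro w hw
    show s5.val w = s.val w
    by_cases hwx : w = x
    · subst hwx; omega
    · by_cases hwt : w = t
      · subst hwt; rw [ht0]; exact hv3
      · exact f3 w hwx hw hwt
  · show s5.val x' = s.val x
    exact f2

end Aux5
section Aux6
variable {V : Type} [DecidableEq V] {N : ℕ}

lemma add_specZ {x y z x' y' z' t : V} {s u : CState V} {n : ℕ}
    (hxx' : x ≠ x') (hxt : x ≠ t) (hx't : x' ≠ t)
    (hyy' : y ≠ y') (hyt : y ≠ t) (hy't : y' ≠ t)
    (hzz' : z ≠ z') (hzt : z ≠ t) (hz't : z' ≠ t)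
    (hxy' : x ≠ y') (hxz' : x ≠ z') (hyx' : y ≠ x') (hyz' : y ≠ z')
    (hzx' : z ≠ x') (hzy' : z ≠ y')
    (hx'y' : x' ≠ y') (hx'z' : x' ≠ z') (hy'z' : y' ≠ z')
    (h : ExecZ N (addProg x y z x' y' z' t) s n u) (ht0 : s.val t = 0) :
    u.val x = s.val x ∧ u.val y = s.val y ∧ u.val z = s.val z ∧
      s.val x + s.val y = s.val z := by
  unfold addProg at h
  cases h with | seq hC1 h =>
  rename_i s1 n1 m1
  cases h with | seq hC2 h =>
  rename_i s2 n2 m2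
  cases h with | seq hC3 h =>
  rename_i s3 n3 m3
  cases h with | seq hL h =>
  rename_i s4 n4 m4
  cases h with | seq hTx h =>
  rename_i s5 n5 m5
  cases h with | seq hTy hTz =>
  rename_i s6 n6 m6
  obtain ⟨c1a, c1b⟩ := copy_specZ hxx' hxt hx't hC1 ht0
  have ht1 : s1.val t = 0 := by rw [c1a t hx't.symm]; exact ht0
  obtain ⟨c2a, c2b⟩ := copy_specZ hyy' hyt hy't hC2 ht1
  have ht2 : s2.val t = 0 := by rw [c2a t hy't.symm]; exact ht1
  obtain ⟨c3a, c3b⟩ := copy_specZ hzz' hzt hz't hC3 ht2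
  -- values after the three copies
  have hvx' : s3.val x' = s.val x := by
    rw [c3a x' hx'z', c2a x' hx'y', c1b]
  have hvy' : s3.val y' = s.val y := by
    rw [c3a y' hy'z', c2b, c1a y hyx'.symm.symm]
  have hvz' : s3.val z' = s.val z := by
    rw [c3b, c2a z hzy'.symm.symm, c1a z hzx'.symm.symm]
  have hother : ∀ w, w ≠ x' → w ≠ y' → w ≠ z' → s3.val w = s.val w := by
    intro w h1 h2 h3
    rw [c3a w h3, c2a w h2, c1a w h1]
  -- the adding loop
  have H := execZ_loop (Q := fun c =>
      c.val z' + s.val x + s.val y = c.val x' + c.val y' + s.val z ∧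
      ∀ w, w ≠ x' → w ≠ y' → w ≠ z' → c.val w = s3.val w)
    (by
      intro c m d hq hb
      cases hb with | seq hd hc =>
      cases hd with | dec _ _ _ hle =>
      obtain ⟨e1, e2⟩ := hq
      cases hc with
      | choiceL _ hc =>
          cases hc with | dec _ _ _ hle1 =>
          refine ⟨rfl, ?_, fun w hw1 hw2 hw3 => ?_⟩
          · simp only [Function.update_apply] at hle1 ⊢
            simp [hx'y', hx'z', hy'z', Ne.symm hx'y', Ne.symm hx'z', Ne.symm hy'z'] at hle1 ⊢
            omega
          · simp [Function.update_apply, hw1, hw2, hw3]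
            exact e2 w hw1 hw2 hw3
      | choiceR _ hc =>
          cases hc with | dec _ _ _ hle1 =>
          refine ⟨rfl, ?_, fun w hw1 hw2 hw3 => ?_⟩
          · simp only [Function.update_apply] at hle1 ⊢
            simp [hx'y', hx'z', hy'z', Ne.symm hx'y', Ne.symm hx'z', Ne.symm hy'z'] at hle1 ⊢
            omega
          · simp [Function.update_apply, hw1, hw2, hw3]
            exact e2 w hw1 hw2 hw3)
    hL (by
      refine ⟨by rw [hvx', hvy', hvz']; omega, fun w _ _ _ => rfl⟩)
  obtain ⟨-, e1, e2⟩ := H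
  -- the three final zero tests
  cases hTx with | zeroTest _ _ hv1 =>
  cases hTy with | zeroTest _ _ hv2 =>
  cases hTz with | zeroTest _ _ hv3 =>
  have hvx0 : s4.val x' = 0 := hv1
  have hvy0 : s4.val y' = 0 := hv2
  have hvz0 : s4.val z' = 0 := hv3
  have hx0 : s4.val x = s.val x := by
    rw [e2 x hxx' hxy' hxz']; exact hother x hxx' hxy' hxz'
  have hy0 : s4.val y = s.val y := by
    rw [e2 y hyx' hyy' hyz']; exact hother y hyx' hyy' hyz'
  have hz0 : s4.val z = s.val z := by
    rw [e2 z hzx' hzy' hzz']; exact hother z hzx' hzy' hzz'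
  exact ⟨hx0, hy0, hz0, by omega⟩

end Aux6
section Aux7
variable {V : Type} [DecidableEq V]

/-- Canonical state with hat counters determined by `N`. -/
def mkS (N : ℕ) (f : V → ℕ) (a b : ℕ) : CState V := ⟨f, fun w => N - f w, a, b⟩

variable {N : ℕ}

omit [DecidableEq V] in
lemma mkS_eq {f g : V → ℕ} {a b a' b' : ℕ} (hfg : ∀ w, f w = g w)
    (ha : a = a') (hb : b = b') : mkS N f a b = mkS N g a' b' := by
  have : f = g := funext hfg
  subst this ha hb; rfl

/-- Running `loop { v -= 1 }` for `k` iterations. -/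
lemma run_loop_dec {v : V} {f : V → ℕ} {a b : ℕ} (hfN : ∀ w, f w ≤ N) :
    ∀ k, k ≤ f v →
      Exec (.loop (.dec v 1)) (mkS N f a b) 0
        (mkS N (Function.update f v (f v - k)) a b) := by
  intro k
  induction k generalizing f with
  | zero =>
      intro _
      have : Function.update f v (f v - 0) = f := by
        simp [Function.update_eq_self]
      rw [this]
      exact .loopStop _ _
  | succ k ih =>
      intro hk
      have h1 : (1 : ℕ) ≤ (mkS N f a b).val v := by
        show (1 : ℕ) ≤ f v
        omega
      have hstep := Exec.dec v 1 (mkS N f a b) h1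
      have hmid : (⟨Function.update (mkS N f a b).val v ((mkS N f a b).val v - 1),
          Function.update (mkS N f a b).hat v ((mkS N f a b).hat v + 1),
          (mkS N f a b).u1, (mkS N f a b).u2⟩ : CState V)
          = mkS N (Function.update f v (f v - 1)) a b := by
        simp only [mkS]
        congr 1
        funext w
        by_cases hw : w = v
        · subst hw
          simp only [Function.update_self]
          have := hfN w
          omega
        · simp [Function.update_of_ne hw]
      rw [hmid] at hstep
      have hfN' : ∀ w, Function.update f v (f v - 1) w ≤ N := by
        intro w
        by_cases hw : w = v
        · subst hw; simp only [Function.update_self]; have := hfN w; omega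
        · simp only [Function.update_of_ne hw]; exact hfN w
      have htail := ih hfN' (by simp only [Function.update_self]; omega)
      have hfin : Function.update (Function.update f v (f v - 1)) v
          (Function.update f v (f v - 1) v - k) = Function.update f v (f v - (k + 1)) := by
        funext w
        by_cases hw : w = v
        · subst hw
          simp only [Function.update_self, Function.update_idem]
          omega
        · simp [Function.update_of_ne hw]
      rw [hfin] at htail
      exact exec_congr (Exec.loopStep hstep htail) rfl rfl

/-- A zero test on a counter whose value is `0`. -/
lemma run_zt {v : V} {f : V → ℕ} {a b : ℕ} (hfN : ∀ w, f w ≤ N)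
    (hv : f v = 0) (hb : 2 * N ≤ b) (ha : 2 ≤ a) :
    Exec (.zeroTest v) (mkS N f a b) 1 (mkS N f (a - 2) (b - 2 * N)) := by
  have h := Exec.zeroTest v (mkS N f a b) N N
    (by simp [mkS, hv]) (by simp [mkS, hv]) (by simp [mkS]; omega) (by simp [mkS]; omega)
  refine exec_congr h rfl ?_
  simp only [mkS]
  congr 1
  · funext w
    by_cases hw : w = v
    · subst hw; simp [Function.update_self, hv]
    · simp [Function.update_of_ne hw]
  · funext w
    by_cases hw : w = v
    · subst hw; simp [Function.update_self, hv]
    · simp [Function.update_of_ne hw]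
  · omega

end Aux7
section Aux8
variable {V : Type} [DecidableEq V] {N : ℕ}

lemma exec_dec1 {v : V} {f : V → ℕ} {a b : ℕ} (hfN : ∀ w, f w ≤ N) (h : 1 ≤ f v) :
    Exec (.dec v 1) (mkS N f a b) 0 (mkS N (Function.update f v (f v - 1)) a b) := by
  refine exec_congr (Exec.dec v 1 (mkS N f a b) h) rfl ?_
  simp only [mkS]
  congr 1
  funext w
  by_cases hw : w = v
  · subst hw; simp only [Function.update_self]; have := hfN w; omega
  · simp [Function.update_of_ne hw]

lemma exec_inc1 {v : V} {f : V → ℕ} {a b : ℕ} (h : f v + 1 ≤ N) :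
    Exec (.inc v 1) (mkS N f a b) 0 (mkS N (Function.update f v (f v + 1)) a b) := by
  have hc : (1 : ℕ) ≤ (mkS N f a b).hat v := by show (1 : ℕ) ≤ N - f v; omega
  refine exec_congr (Exec.inc v 1 (mkS N f a b) hc) rfl ?_
  simp only [mkS]
  congr 1
  funext w
  by_cases hw : w = v
  · subst hw; simp only [Function.update_self]; omega
  · simp [Function.update_of_ne hw]

lemma update_le {f : V → ℕ} {v : V} {c : ℕ} (hfN : ∀ w, f w ≤ N) (hc : c ≤ N) :
    ∀ w, Function.update f v c w ≤ N := by
  intro w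
  by_cases hw : w = v
  · subst hw; simp [Function.update_self, hc]
  · simp [Function.update_of_ne hw]; exact hfN w

/-- Running `loop { x -= 1; x' += 1; t += 1 }` for `k` iterations. -/
lemma run_loop_copy2 {x x' t : V} (hxx' : x ≠ x') (hxt : x ≠ t) (hx't : x' ≠ t)
    {a b : ℕ} :
    ∀ (k : ℕ) (f : V → ℕ), (∀ w, f w ≤ N) → k ≤ f x → f x' + k ≤ N → f t + k ≤ N →
    ∀ g : V → ℕ, g x = f x - k → g x' = f x' + k → g t = f t + k →
      (∀ w, w ≠ x → w ≠ x' → w ≠ t → g w = f w) →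
      Exec (.loop (.seq (.dec x 1) (.seq (.inc x' 1) (.inc t 1))))
        (mkS N f a b) 0 (mkS N g a b) := by
  intro k
  induction k with
  | zero =>
      intro f hfN _ _ _ g hg1 hg2 hg3 hg4
      have : mkS N f a b = mkS N g a b := by
        refine mkS_eq (fun w => ?_) rfl rfl
        by_cases h1 : w = x
        · subst h1; omega
        · by_cases h2 : w = x'
          · subst h2; omega
          · by_cases h3 : w = t
            · subst h3; omega
            · exact (hg4 w h1 h2 h3).symm
      rw [← this]
      exact .loopStop _ _
  | succ k ih =>
      intro f hfN hk hk' hkt g hg1 hg2 hg3 hg4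
      set f1 := Function.update f x (f x - 1) with hf1
      set f2 := Function.update f1 x' (f1 x' + 1) with hf2
      set f3 := Function.update f2 t (f2 t + 1) with hf3
      have hfx' : f1 x' = f x' := by simp [hf1, Function.update_of_ne (Ne.symm hxx')]
      have hf2x' : f2 x' = f x' + 1 := by simp [hf2, hfx']
      have hf2t : f2 t = f t := by
        simp [hf2, hf1, Function.update_of_ne (Ne.symm hx't),
          Function.update_of_ne (Ne.symm hxt)]
      have hf3t : f3 t = f t + 1 := by simp [hf3, hf2t]
      have hf3x : f3 x = f x - 1 := by
        simp [hf3, hf2, hf1, Function.update_of_ne hxt, Function.update_of_ne hxx']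
      have hf3x' : f3 x' = f x' + 1 := by
        simp [hf3, Function.update_of_ne hx't, hf2x']
      have hf3o : ∀ w, w ≠ x → w ≠ x' → w ≠ t → f3 w = f w := by
        intro w h1 h2 h3
        simp [hf3, hf2, hf1, Function.update_of_ne h1, Function.update_of_ne h2,
          Function.update_of_ne h3]
      have hf1N : ∀ w, f1 w ≤ N := update_le hfN (by have := hfN x; omega)
      have hf2N : ∀ w, f2 w ≤ N := update_le hf1N (by rw [hfx']; omega)
      have hf3N : ∀ w, f3 w ≤ N := update_le hf2N (by rw [hf2t]; omega)
      have hstep : Exec (.seq (.dec x 1) (.seq (.inc x' 1) (.inc t 1)))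
          (mkS N f a b) 0 (mkS N f3 a b) := by
        refine exec_congr (Exec.seq (exec_dec1 hfN (by omega))
          (Exec.seq (exec_inc1 (v := x') (f := f1) (by rw [hfx']; omega))
            (exec_inc1 (v := t) (f := f2) (by rw [hf2t]; omega)))) rfl ?_
        show mkS N (Function.update f2 t (f2 t + 1)) a b = mkS N f3 a b
        rfl
      have htail := ih f3 hf3N (by omega) (by omega) (by omega) g
        (by omega) (by omega) (by omega)
        (fun w h1 h2 h3 => by rw [hg4 w h1 h2 h3, hf3o w h1 h2 h3])
      exact exec_congr (Exec.loopStep hstep htail) rfl rfl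

/-- Running `loop { t -= 1; x += 1 }` for `k` iterations. -/
lemma run_loop_copy3 {x t : V} (hxt : x ≠ t) {a b : ℕ} :
    ∀ (k : ℕ) (f : V → ℕ), (∀ w, f w ≤ N) → k ≤ f t → f x + k ≤ N →
    ∀ g : V → ℕ, g t = f t - k → g x = f x + k →
      (∀ w, w ≠ x → w ≠ t → g w = f w) →
      Exec (.loop (.seq (.dec t 1) (.inc x 1))) (mkS N f a b) 0 (mkS N g a b) := by
  intro k
  induction k with
  | zero =>
      intro f hfN _ _ g hg1 hg2 hg3
      have : mkS N f a b = mkS N g a b := by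
        refine mkS_eq (fun w => ?_) rfl rfl
        by_cases h1 : w = x
        · subst h1; omega
        · by_cases h2 : w = t
          · subst h2; omega
          · exact (hg3 w h1 h2).symm
      rw [← this]
      exact .loopStop _ _
  | succ k ih =>
      intro f hfN hk hk' g hg1 hg2 hg3
      set f1 := Function.update f t (f t - 1) with hf1
      set f2 := Function.update f1 x (f1 x + 1) with hf2
      have hf1x : f1 x = f x := by simp [hf1, Function.update_of_ne hxt]
      have hf2x : f2 x = f x + 1 := by simp [hf2, hf1x]
      have hf2t : f2 t = f t - 1 := by
        simp [hf2, hf1, Function.update_of_ne (Ne.symm hxt)]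
      have hf2o : ∀ w, w ≠ x → w ≠ t → f2 w = f w := by
        intro w h1 h2
        simp [hf2, hf1, Function.update_of_ne h1, Function.update_of_ne h2]
      have hf1N : ∀ w, f1 w ≤ N := update_le hfN (by have := hfN t; omega)
      have hf2N : ∀ w, f2 w ≤ N := update_le hf1N (by rw [hf1x]; omega)
      have hstep : Exec (.seq (.dec t 1) (.inc x 1)) (mkS N f a b) 0 (mkS N f2 a b) :=
        exec_congr (Exec.seq (exec_dec1 hfN (by omega))
          (exec_inc1 (v := x) (f := f1) (by rw [hf1x]; omega))) rfl rfl
      have htail := ih f2 hf2N (by omega) (by omega) g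
        (by omega) (by omega) (fun w h1 h2 => by rw [hg3 w h1 h2, hf2o w h1 h2])
      exact exec_congr (Exec.loopStep hstep htail) rfl rfl

end Aux8
section Aux9
variable {V : Type} [DecidableEq V] {N : ℕ}

lemma exec_loop_append_aux {b : CProg V} :
    ∀ {p : CProg V} {s t : CState V} {n : ℕ}, Exec p s n t → p = .loop b →
    ∀ {u : CState V} {m : ℕ}, Exec (.loop b) t m u → Exec (.loop b) s (n + m) u := by
  intro p s t n h
  induction h with
  | skip => intro hp; cases hp
  | inc v c s h => intro hp; cases hp
  | dec v c s h => intro hp; cases hp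
  | seq h1 h2 ih1 ih2 => intro hp; cases hp
  | choiceL q h ih => intro hp; cases hp
  | choiceR p h ih => intro hp; cases hp
  | loopStop p s => intro hp u m h2; simpa using h2
  | loopStep h1 h2 ih1 ih2 =>
      intro hp u m h3
      cases hp
      exact exec_congr (Exec.loopStep h1 (ih2 rfl h3)) (by omega) rfl
  | zeroTest v s m₁ m₂ h1 h2 h3 h4 => intro hp; cases hp
  | zeroTestHat v s m₁ m₂ h1 h2 h3 h4 => intro hp; cases hp

lemma exec_loop_append {b : CProg V} {s t u : CState V} {n m : ℕ}
    (h1 : Exec (.loop b) s n t) (h2 : Exec (.loop b) t m u) :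
    Exec (.loop b) s (n + m) u :=
  exec_loop_append_aux h1 rfl h2

/-- One arm of the adding loop, run `k` times (decrementing `z'` and `v`). -/
lemma run_loop_add_arm {z' v v2 : V} (hvz' : v ≠ z')
    (arm : Bool)
    {a b : ℕ} :
    ∀ (k : ℕ) (f : V → ℕ), (∀ w, f w ≤ N) → k ≤ f z' → k ≤ f v →
    ∀ g : V → ℕ, g z' = f z' - k → g v = f v - k →
      (∀ w, w ≠ z' → w ≠ v → g w = f w) →
      Exec (.loop (.seq (.dec z' 1)
          (if arm then .choice (.dec v 1) (.dec v2 1) else .choice (.dec v2 1) (.dec v 1))))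
        (mkS N f a b) 0 (mkS N g a b) := by
  intro k
  induction k with
  | zero =>
      intro f hfN _ _ g hg1 hg2 hg3
      have : mkS N f a b = mkS N g a b := by
        refine mkS_eq (fun w => ?_) rfl rfl
        by_cases h1 : w = z'
        · subst h1; omega
        · by_cases h2 : w = v
          · subst h2; omega
          · exact (hg3 w h1 h2).symm
      rw [← this]
      exact .loopStop _ _
  | succ k ih =>
      intro f hfN hk hk' g hg1 hg2 hg3
      set f1 := Function.update f z' (f z' - 1) with hf1
      set f2 := Function.update f1 v (f1 v - 1) with hf2
      have hf1v : f1 v = f v := by simp [hf1, Function.update_of_ne hvz']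
      have hf2v : f2 v = f v - 1 := by simp [hf2, hf1v]
      have hf2z : f2 z' = f z' - 1 := by
        simp [hf2, hf1, Function.update_of_ne (Ne.symm hvz')]
      have hf2o : ∀ w, w ≠ z' → w ≠ v → f2 w = f w := by
        intro w h1 h2
        simp [hf2, hf1, Function.update_of_ne h1, Function.update_of_ne h2]
      have hf1N : ∀ w, f1 w ≤ N := update_le hfN (by have := hfN z'; omega)
      have hf2N : ∀ w, f2 w ≤ N := update_le hf1N (by rw [hf1v]; have := hfN v; omega)
      have hdec2 : Exec (.dec v 1) (mkS N f1 a b) 0 (mkS N f2 a b) :=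
        exec_dec1 (f := f1) hf1N (by rw [hf1v]; omega)
      have hstep : Exec (.seq (.dec z' 1)
          (if arm then .choice (.dec v 1) (.dec v2 1) else .choice (.dec v2 1) (.dec v 1)))
          (mkS N f a b) 0 (mkS N f2 a b) := by
        have hch : Exec (if arm then .choice (.dec v 1) (.dec v2 1)
            else .choice (.dec v2 1) (.dec v 1)) (mkS N f1 a b) 0 (mkS N f2 a b) := by
          cases arm
          · exact Exec.choiceR _ hdec2
          · exact Exec.choiceL _ hdec2
        exact exec_congr (Exec.seq (exec_dec1 hfN (by omega)) hch) rfl rfl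
      have htail := ih f2 hf2N (by omega) (by omega) g
        (by omega) (by omega) (fun w h1 h2 => by rw [hg3 w h1 h2, hf2o w h1 h2])
      exact exec_congr (Exec.loopStep hstep htail) rfl rfl

end Aux9
section Aux10
variable {V : Type} [DecidableEq V] {N : ℕ}

lemma run_copy {x x' t : V} (hxx' : x ≠ x') (hxt : x ≠ t) (hx't : x' ≠ t)
    {f : V → ℕ} {a b : ℕ} (hfN : ∀ w, f w ≤ N) (ht0 : f t = 0)
    (ha : 6 ≤ a) (hb : 6 * N ≤ b) :
    Exec (copyProg x x' t) (mkS N f a b) 3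
      (mkS N (Function.update f x' (f x)) (a - 6) (b - 6 * N)) := by
  have hxN := hfN x
  -- stage 1
  set g1 := Function.update f x' 0 with hg1
  have hL1 : Exec (.loop (.dec x' 1)) (mkS N f a b) 0 (mkS N g1 a b) := by
    have h := run_loop_dec (v := x') (a := a) (b := b) hfN (f x') le_rfl
    simpa [hg1] using h
  have hg1N : ∀ w, g1 w ≤ N := update_le hfN (by omega)
  have hg1x : g1 x = f x := Function.update_of_ne hxx' _ _
  have hg1t : g1 t = 0 := by rw [hg1, Function.update_of_ne (Ne.symm hx't)]; exact ht0
  have hT1 : Exec (.zeroTest x') (mkS N g1 a b) 1 (mkS N g1 (a - 2) (b - 2 * N)) :=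
    run_zt hg1N (by simp [hg1]) (by omega) (by omega)
  -- stage 2
  set g2 : V → ℕ := fun w => if w = x then 0 else if w = x' then f x else
    if w = t then f x else f w with hg2
  have hg2x : g2 x = 0 := by simp [hg2]
  have hg2x' : g2 x' = f x := by simp [hg2, Ne.symm hxx']
  have hg2t : g2 t = f x := by simp [hg2, Ne.symm hxt, Ne.symm hx't]
  have hg2o : ∀ w, w ≠ x → w ≠ x' → w ≠ t → g2 w = f w := by
    intro w h1 h2 h3; simp [hg2, h1, h2, h3]
  have hL2 : Exec (.loop (.seq (.dec x 1) (.seq (.inc x' 1) (.inc t 1))))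
      (mkS N g1 (a - 2) (b - 2 * N)) 0 (mkS N g2 (a - 2) (b - 2 * N)) := by
    refine run_loop_copy2 hxx' hxt hx't (f x) g1 hg1N (by rw [hg1x]) ?_ ?_ g2
      (by rw [hg2x, hg1x]; omega) (by rw [hg2x']; simp only [hg1, Function.update_self]; omega) (by rw [hg2t, hg1t]; omega)
      (fun w h1 h2 h3 => by rw [hg2o w h1 h2 h3, hg1, Function.update_of_ne h2])
    · simp [hg1]; omega
    · rw [hg1t]; omega
  have hg2N : ∀ w, g2 w ≤ N := by
    intro w
    rw [hg2]
    dsimp only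
    split <;> try omega
    split <;> try omega
    split <;> [omega; exact hfN w]
  have hT2 : Exec (.zeroTest x) (mkS N g2 (a - 2) (b - 2 * N)) 1
      (mkS N g2 (a - 4) (b - 4 * N)) := by
    have h := run_zt (v := x) (a := a - 2) (b := b - 2 * N) hg2N hg2x (by omega) (by omega)
    refine exec_congr h rfl (mkS_eq (fun w => rfl) (by omega) (by omega))
  -- stage 3
  set g3 := Function.update f x' (f x) with hg3
  have hg3t : g3 t = 0 := by rw [hg3, Function.update_of_ne (Ne.symm hx't)]; exact ht0
  have hg3x : g3 x = f x := Function.update_of_ne hxx' _ _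
  have hg3N : ∀ w, g3 w ≤ N := update_le hfN hxN
  have hL3 : Exec (.loop (.seq (.dec t 1) (.inc x 1)))
      (mkS N g2 (a - 4) (b - 4 * N)) 0 (mkS N g3 (a - 4) (b - 4 * N)) := by
    refine run_loop_copy3 hxt (f x) g2 hg2N (by rw [hg2t]) (by rw [hg2x]; omega) g3
      (by rw [hg3t, hg2t]; omega) (by rw [hg3x, hg2x]; omega) ?_
    intro w h1 h2
    by_cases h3 : w = x'
    · subst h3; rw [hg3, Function.update_self, hg2x']
    · rw [hg3, Function.update_of_ne h3, hg2o w h1 h3 h2]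
  have hT3 : Exec (.zeroTest t) (mkS N g3 (a - 4) (b - 4 * N)) 1
      (mkS N g3 (a - 6) (b - 6 * N)) := by
    have h := run_zt (v := t) (a := a - 4) (b := b - 4 * N) hg3N hg3t (by omega) (by omega)
    refine exec_congr h rfl (mkS_eq (fun w => rfl) (by omega) (by omega))
  exact exec_congr (Exec.seq hL1 (Exec.seq hT1 (Exec.seq hL2 (Exec.seq hT2
    (Exec.seq hL3 hT3))))) rfl rfl

end Aux10
section Aux11
variable {V : Type} [DecidableEq V] {N : ℕ}

lemma run_add {x y z x' y' z' t : V}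
    (hxx' : x ≠ x') (hxt : x ≠ t) (hx't : x' ≠ t)
    (hyy' : y ≠ y') (hyt : y ≠ t) (hy't : y' ≠ t)
    (hzz' : z ≠ z') (hzt : z ≠ t) (hz't : z' ≠ t)
    (hyx' : y ≠ x') (hzx' : z ≠ x') (hzy' : z ≠ y')
    (hx'y' : x' ≠ y') (hx'z' : x' ≠ z') (hy'z' : y' ≠ z')
    {f : V → ℕ} {a b : ℕ} (hfN : ∀ w, f w ≤ N) (ht0 : f t = 0)
    (hsum : f x + f y = f z) (ha : 24 ≤ a) (hb : 24 * N ≤ b) :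
    ∃ g : V → ℕ, Exec (addProg x y z x' y' z' t) (mkS N f a b) 12
      (mkS N g (a - 24) (b - 24 * N)) := by
  -- first copy
  have C1 := run_copy (N := N) hxx' hxt hx't (a := a) (b := b) hfN ht0
    (by omega) (by omega)
  set f1 := Function.update f x' (f x) with hf1
  have hf1N : ∀ w, f1 w ≤ N := update_le hfN (hfN x)
  have hf1t : f1 t = 0 := by rw [hf1, Function.update_of_ne (Ne.symm hx't)]; exact ht0
  have hf1y : f1 y = f y := by rw [hf1, Function.update_of_ne hyx']
  have hf1z : f1 z = f z := by rw [hf1, Function.update_of_ne hzx']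
  have hf1x : f1 x = f x := by rw [hf1, Function.update_of_ne hxx']
  have hf1x' : f1 x' = f x := by rw [hf1, Function.update_self]
  -- second copy
  have C2 := run_copy (N := N) hyy' hyt hy't (f := f1) (a := a - 6) (b := b - 6 * N)
    hf1N hf1t (by omega) (by omega)
  have C2 := exec_congr C2 rfl (mkS_eq (fun w => rfl) (by omega : a - 6 - 6 = a - 12)
    (by omega : b - 6 * N - 6 * N = b - 12 * N))
  set f2 := Function.update f1 y' (f1 y) with hf2
  have hf2N : ∀ w, f2 w ≤ N := update_le hf1N (hf1N y)
  have hf2t : f2 t = 0 := by rw [hf2, Function.update_of_ne (Ne.symm hy't)]; exact hf1t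
  have hf2z : f2 z = f z := by rw [hf2, Function.update_of_ne hzy']; exact hf1z
  have hf2x' : f2 x' = f x := by rw [hf2, Function.update_of_ne hx'y']; exact hf1x'
  have hf2y' : f2 y' = f y := by rw [hf2, Function.update_self]; exact hf1y
  -- third copy
  have C3 := run_copy (N := N) hzz' hzt hz't (f := f2) (a := a - 12) (b := b - 12 * N)
    hf2N hf2t (by omega) (by omega)
  have C3 := exec_congr C3 rfl (mkS_eq (fun w => rfl) (by omega : a - 12 - 6 = a - 18)
    (by omega : b - 12 * N - 6 * N = b - 18 * N))
  set f3 := Function.update f2 z' (f2 z) with hf3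
  have hf3N : ∀ w, f3 w ≤ N := update_le hf2N (hf2N z)
  have hf3x' : f3 x' = f x := by rw [hf3, Function.update_of_ne hx'z']; exact hf2x'
  have hf3y' : f3 y' = f y := by rw [hf3, Function.update_of_ne hy'z']; exact hf2y'
  have hf3z' : f3 z' = f z := by rw [hf3, Function.update_self]; exact hf2z
  -- the adding loop, first decrementing x' (f x times), then y' (f y times)
  set g4 : V → ℕ := fun w => if w = z' then f y else if w = x' then 0 else f3 w with hg4
  have hg4z' : g4 z' = f y := by simp [hg4]
  have hg4x' : g4 x' = 0 := by simp [hg4, hx'z']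
  have hg4y' : g4 y' = f y := by simp [hg4, Ne.symm hy'z', Ne.symm hx'y', hf3y']
  have hg4o : ∀ w, w ≠ z' → w ≠ x' → g4 w = f3 w := by
    intro w h1 h2; simp [hg4, h1, h2]
  have hg4N : ∀ w, g4 w ≤ N := by
    intro w
    by_cases h1 : w = z'
    · subst h1; rw [hg4z']; exact le_trans (by omega) (hfN z)
    · by_cases h2 : w = x'
      · subst h2; rw [hg4x']; omega
      · rw [hg4o w h1 h2]; exact hf3N w
  have hfxz : f x ≤ f z := by omega
  have L1 : Exec (.loop (.seq (.dec z' 1) (.choice (.dec x' 1) (.dec y' 1))))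
      (mkS N f3 (a - 18) (b - 18 * N)) 0 (mkS N g4 (a - 18) (b - 18 * N)) := by
    have h := run_loop_add_arm (N := N) (z' := z') (v := x') (v2 := y') hx'z' true
      (a := a - 18) (b := b - 18 * N) (f x) f3 hf3N (by rw [hf3z']; omega)
      (by rw [hf3x']) g4 (by rw [hg4z', hf3z']; omega) (by rw [hg4x', hf3x']; omega)
      hg4o
    simpa using h
  set g5 : V → ℕ := fun w => if w = z' then 0 else if w = y' then 0 else g4 w with hg5
  have hg5z' : g5 z' = 0 := by simp [hg5]
  have hg5y' : g5 y' = 0 := by simp [hg5, hy'z']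
  have hg5x' : g5 x' = 0 := by simp [hg5, hx'z', hx'y', hg4x']
  have hg5o : ∀ w, w ≠ z' → w ≠ y' → g5 w = g4 w := by
    intro w h1 h2; simp [hg5, h1, h2]
  have hg5N : ∀ w, g5 w ≤ N := by
    intro w
    by_cases h1 : w = z'
    · subst h1; rw [hg5z']; omega
    · by_cases h2 : w = y'
      · subst h2; rw [hg5y']; omega
      · rw [hg5o w h1 h2]; exact hg4N w
  have L2 : Exec (.loop (.seq (.dec z' 1) (.choice (.dec x' 1) (.dec y' 1))))
      (mkS N g4 (a - 18) (b - 18 * N)) 0 (mkS N g5 (a - 18) (b - 18 * N)) := by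
    have h := run_loop_add_arm (N := N) (z' := z') (v := y') (v2 := x') hy'z' false
      (a := a - 18) (b := b - 18 * N) (f y) g4 hg4N (by rw [hg4z']) (by rw [hg4y'])
      g5 (by rw [hg5z', hg4z']; omega) (by rw [hg5y', hg4y']; omega)
      (fun w h1 h2 => hg5o w h1 h2)
    simpa using h
  have L := exec_loop_append L1 L2
  -- final zero tests
  have T1 : Exec (.zeroTest x') (mkS N g5 (a - 18) (b - 18 * N)) 1
      (mkS N g5 (a - 20) (b - 20 * N)) := by
    have h := run_zt (v := x') (a := a - 18) (b := b - 18 * N) hg5N hg5x'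
      (by omega) (by omega)
    exact exec_congr h rfl (mkS_eq (fun w => rfl) (by omega) (by omega))
  have T2 : Exec (.zeroTest y') (mkS N g5 (a - 20) (b - 20 * N)) 1
      (mkS N g5 (a - 22) (b - 22 * N)) := by
    have h := run_zt (v := y') (a := a - 20) (b := b - 20 * N) hg5N hg5y'
      (by omega) (by omega)
    exact exec_congr h rfl (mkS_eq (fun w => rfl) (by omega) (by omega))
  have T3 : Exec (.zeroTest z') (mkS N g5 (a - 22) (b - 22 * N)) 1
      (mkS N g5 (a - 24) (b - 24 * N)) := by
    have h := run_zt (v := z') (a := a - 22) (b := b - 22 * N) hg5N hg5z'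
      (by omega) (by omega)
    exact exec_congr h rfl (mkS_eq (fun w => rfl) (by omega) (by omega))
  refine ⟨g5, ?_⟩
  unfold addProg
  exact exec_congr (Exec.seq C1 (Exec.seq C2 (Exec.seq C3 (Exec.seq L
    (Exec.seq T1 (Exec.seq T2 T3)))))) (by norm_num) rfl

end Aux11
theorem addition_spec {V : Type} [DecidableEq V] (x y z x' y' z' t : V)
    (hdist : Function.Injective ![x, y, z, x', y', z', t])
    (N : ℕ) (s : CState V)
    (hinv : HatInv N s) (hvalid : ValidCfg N s)
    (hbudget : 24 ≤ s.u1) (ht : s.val t = 0) :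
    -- (1)
    (AdmitsValidRun N (addProg x y z x' y' z' t) s ↔
      s.val x + s.val y = s.val z) ∧
    -- (2)
    (IsComponent (addProg x y z x' y' z' t) ∧
      ∀ (n : ℕ) (u : CState V), Exec (addProg x y z x' y' z' t) s n u →
        ValidCfg N u → n = 12) ∧
    -- (3)
    (∀ (n : ℕ) (u : CState V), Exec (addProg x y z x' y' z' t) s n u →
      ValidCfg N u →
      u.val x = s.val x ∧ u.val y = s.val y ∧ u.val z = s.val z) := by
  have kv : ∀ (i j : Fin 7), ![x, y, z, x', y', z', t] i = ![x, y, z, x', y', z', t] j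
      → i = j := fun i j h => hdist h
  have hxx' : x ≠ x' := fun h => absurd (kv 0 3 h) (by decide)
  have hxt : x ≠ t := fun h => absurd (kv 0 6 h) (by decide)
  have hx't : x' ≠ t := fun h => absurd (kv 3 6 h) (by decide)
  have hyy' : y ≠ y' := fun h => absurd (kv 1 4 h) (by decide)
  have hyt : y ≠ t := fun h => absurd (kv 1 6 h) (by decide)
  have hy't : y' ≠ t := fun h => absurd (kv 4 6 h) (by decide)
  have hzz' : z ≠ z' := fun h => absurd (kv 2 5 h) (by decide)
  have hzt : z ≠ t := fun h => absurd (kv 2 6 h) (by decide)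
  have hz't : z' ≠ t := fun h => absurd (kv 5 6 h) (by decide)
  have hxy' : x ≠ y' := fun h => absurd (kv 0 4 h) (by decide)
  have hxz' : x ≠ z' := fun h => absurd (kv 0 5 h) (by decide)
  have hyx' : y ≠ x' := fun h => absurd (kv 1 3 h) (by decide)
  have hyz' : y ≠ z' := fun h => absurd (kv 1 5 h) (by decide)
  have hzx' : z ≠ x' := fun h => absurd (kv 2 3 h) (by decide)
  have hzy' : z ≠ y' := fun h => absurd (kv 2 4 h) (by decide)
  have hx'y' : x' ≠ y' := fun h => absurd (kv 3 4 h) (by decide)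
  have hx'z' : x' ≠ z' := fun h => absurd (kv 3 5 h) (by decide)
  have hy'z' : y' ≠ z' := fun h => absurd (kv 4 5 h) (by decide)
  have hv1 : s.u2 = s.u1 * N := hvalid
  -- analysis of an arbitrary valid run
  have main : ∀ (n : ℕ) (u : CState V), Exec (addProg x y z x' y' z' t) s n u →
      ValidCfg N u → u.val x = s.val x ∧ u.val y = s.val y ∧ u.val z = s.val z ∧
        s.val x + s.val y = s.val z := by
    intro n u hex hvu
    have hn : n = 12 := exec_count hex (nice_add x y z x' y' z' t)
    subst hn
    have hu1 : u.u1 + 2 * 12 = s.u1 := exec_u1 hex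
    have hv2 : u.u2 = u.u1 * N := hvu
    have hexact : s.u2 = u.u2 + 2 * 12 * N := by
      rw [hv1, hv2]
      have hs1 : s.u1 = u.u1 + 24 := by omega
      rw [hs1]
      ring
    have hZ := exec_to_execZ hex hinv hexact
    exact add_specZ hxx' hxt hx't hyy' hyt hy't hzz' hzt hz't hxy' hxz' hyx' hyz'
      hzx' hzy' hx'y' hx'z' hy'z' hZ ht
  refine ⟨⟨?_, ?_⟩, ⟨?_, ?_⟩, ?_⟩
  · rintro ⟨-, n, u, hex, hvu⟩
    exact (main n u hex hvu).2.2.2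
  · intro hsum
    refine ⟨hvalid, ?_⟩
    have hfN : ∀ w, s.val w ≤ N := fun w => by have := hinv w; omega
    have hbN : 24 * N ≤ s.u2 := by
      rw [hv1]; exact Nat.mul_le_mul_right N hbudget
    obtain ⟨g, hg⟩ := run_add (N := N) hxx' hxt hx't hyy' hyt hy't hzz' hzt hz't
      hyx' hzx' hzy' hx'y' hx'z' hy'z' (f := s.val) (a := s.u1) (b := s.u2)
      hfN ht hsum hbudget hbN
    have hs_mk : s = mkS N s.val s.u1 s.u2 := by
      have hh : s.hat = fun w => N - s.val w := funext fun w => by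
        have := hinv w; omega
      show s = (⟨s.val, fun w => N - s.val w, s.u1, s.u2⟩ : CState V)
      rw [← hh]
    rw [← hs_mk] at hg
    refine ⟨12, _, hg, ?_⟩
    show (mkS N g (s.u1 - 24) (s.u2 - 24 * N)).u2 = (mkS N g (s.u1 - 24) (s.u2 - 24 * N)).u1 * N
    show s.u2 - 24 * N = (s.u1 - 24) * N
    have : (s.u1 - 24) * N = s.u1 * N - 24 * N := Nat.sub_mul _ _ _
    omega
  · exact ⟨Polynomial.C 12, fun N' s' t' n' _ _ hex _ => by
      rw [exec_count hex (nice_add x y z x' y' z' t)]; simp⟩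
  · intro n u hex _
    exact exec_count hex (nice_add x y z x' y' z' t)
  · intro n u hex hvu
    obtain ⟨h1, h2, h3, -⟩ := main n u hex hvu
    exact ⟨h1, h2, h3⟩
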